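/- With f1, f2 homogeneous of degrees d1 ≤ d2 in A[X1,X2] forming a regular sequence and β = (β1,β2) with |β| ≤ d1 − 1, the Sylvester form sylv_β(f1,f2) is an inertia form: for k = 1,2, X_k^{β_k+1} · det(f_{i,j}) lies in the ideal (f1,f2) of A[X1,X2], hence sylv_β(f1,f2) ∈ H^0_m(B)_{δ−|β|} where m = (X1,X2). -/
import Mathlib

open MvPolynomial

/-- With `f1, f2` homogeneous of degrees `d1 ≤ d2` in `A[X1,X2]`
forming a regular sequence, and `β = (β1,β2)` with `|β| ≤ d1 − 1`, the Sylvester form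
`sylv_β(f1,f2)` (the determinant of a decomposition
`f_i = X1^{β1+1} f_{i,1} + X2^{β2+1} f_{i,2}`) is an inertia form: for `k = 1, 2`,
`X_k^{β_k+1} · det(f_{i,j})` lies in `(f1, f2)`, hence its class lies in
`H^0_m(B)_{δ−|β|}` — it is homogeneous of degree `δ − |β|` and annihilated modulo
`(f1,f2)` by a power of `m = (X1, X2)`. -/
theorem stmt2 {A : Type*} [CommRing A] [Nontrivial A] (d1 d2 : ℕ)
    (hd1 : 1 ≤ d1) (hd12 : d1 ≤ d2)
    (f1 f2 : MvPolynomial (Fin 2) A)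
    (hf1 : f1.IsHomogeneous d1) (hf2 : f2.IsHomogeneous d2)
    (hreg : RingTheory.Sequence.IsRegular (MvPolynomial (Fin 2) A) [f1, f2])
    (β1 β2 : ℕ) (hβ : β1 + β2 + 1 ≤ d1)
    (a11 a12 a21 a22 : MvPolynomial (Fin 2) A)
    (ha11 : a11.IsHomogeneous (d1 - β1 - 1)) (ha12 : a12.IsHomogeneous (d1 - β2 - 1))
    (ha21 : a21.IsHomogeneous (d2 - β1 - 1)) (ha22 : a22.IsHomogeneous (d2 - β2 - 1))
    (hfa1 : f1 = X 0 ^ (β1 + 1) * a11 + X 1 ^ (β2 + 1) * a12)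
    (hfa2 : f2 = X 0 ^ (β1 + 1) * a21 + X 1 ^ (β2 + 1) * a22) :
    X 0 ^ (β1 + 1) * (a11 * a22 - a12 * a21) ∈ Ideal.span {f1, f2} ∧
    X 1 ^ (β2 + 1) * (a11 * a22 - a12 * a21) ∈ Ideal.span {f1, f2} ∧
    (a11 * a22 - a12 * a21).IsHomogeneous (d1 + d2 - 2 - (β1 + β2)) ∧
    ∃ k : ℕ, ∀ h ∈ (Ideal.span {(X 0 : MvPolynomial (Fin 2) A), X 1}) ^ k,
      h * (a11 * a22 - a12 * a21) ∈ Ideal.span {f1, f2} := by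
  have h0 : X 0 ^ (β1 + 1) * (a11 * a22 - a12 * a21) ∈ Ideal.span {f1, f2} := by
    rw [Ideal.mem_span_pair]
    exact ⟨a22, -a12, by rw [hfa1, hfa2]; ring⟩
  have h1 : X 1 ^ (β2 + 1) * (a11 * a22 - a12 * a21) ∈ Ideal.span {f1, f2} := by
    rw [Ideal.mem_span_pair]
    exact ⟨-a21, a11, by rw [hfa1, hfa2]; ring⟩
  refine ⟨h0, h1, ?_, ?_⟩
  · have e1 : (d1 - β1 - 1) + (d2 - β2 - 1) = d1 + d2 - 2 - (β1 + β2) := by omega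
    have e2 : (d1 - β2 - 1) + (d2 - β1 - 1) = d1 + d2 - 2 - (β1 + β2) := by omega
    exact (e1 ▸ ha11.mul ha22).sub (e2 ▸ ha12.mul ha21)
  · refine ⟨(β1 + 1) + (β2 + 1), fun h hh => ?_⟩
    have hle : (Ideal.span {(X 0 : MvPolynomial (Fin 2) A), X 1}) ^ ((β1 + 1) + (β2 + 1)) ≤
        Ideal.span {(X 0 : MvPolynomial (Fin 2) A) ^ (β1 + 1), X 1 ^ (β2 + 1)} := by
      have : Ideal.span {(X 0 : MvPolynomial (Fin 2) A), X 1} =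
          Ideal.span {(X 0 : MvPolynomial (Fin 2) A)} ⊔ Ideal.span {X 1} := by
        rw [Ideal.span_insert]
      rw [this]
      refine Ideal.sup_pow_add_le_pow_sup_pow.trans ?_
      rw [Ideal.span_singleton_pow, Ideal.span_singleton_pow, Ideal.span_insert]
    obtain ⟨u, v, huv⟩ := Ideal.mem_span_pair.mp (hle hh)
    rw [← huv]
    have : (u * X 0 ^ (β1 + 1) + v * X 1 ^ (β2 + 1)) * (a11 * a22 - a12 * a21) =
        u * (X 0 ^ (β1 + 1) * (a11 * a22 - a12 * a21)) +
        v * (X 1 ^ (β2 + 1) * (a11 * a22 - a12 * a21)) := by ring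
    rw [this]
    exact Ideal.add_mem _ (Ideal.mul_mem_left _ _ h0) (Ideal.mul_mem_left _ _ h1)
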